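/- arXiv:2211.00035 — 2 statements merged into one kernel-verified Lean document; each statement's English description precedes it below -/
import Mathlib

section
/- A Borel probability measure μ on ℝ has a unique geometric ℓ-quantile if and only if the preimage F_X⁻¹({p}) of p = (1+ℓ)/2 under the CDF F_X is empty or a singleton. -/
/-!
For `a ≤ b` the integrand of `φ b - φ a + ℓ (b - a)` lies pointwise between the step functions
`(b - a) (2·1{x ≤ a} - 1)` and `(b - a) (2·1{x < b} - 1)`, so with `F = cdf μ`
`2 (b - a) (F a - p) ≤ φ b - φ a ≤ 2 (b - a) (F(b⁻) - p)`. Hence the minimisers of `φ` are exactly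
the `p`-quantiles `F(α⁻) ≤ p ≤ F α`. They exist because `0 < p < 1`, and two distinct ones `a < b`
force `F = p` on `[a, b)`; so the minimiser is unique iff `F` takes the value `p` at most once.
-/

open MeasureTheory Function ProbabilityTheory Set

def quantiles (F : ℝ → ℝ) (p : ℝ) : Set ℝ := {x | leftLim F x ≤ p ∧ p ≤ F x}

noncomputable def geometricQuantileObjective (μ : Measure ℝ) (ℓ α : ℝ) : ℝ :=
  ∫ x, (|α - x| - |x|) ∂μ - ℓ * α

section Monotone

variable {F : ℝ → ℝ} {x p : ℝ}

theorem Monotone.leftLim_le_iff (hF : Monotone F) : leftLim F x ≤ p ↔ ∀ y < x, F y ≤ p :=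
  ⟨fun h _ hy => (hF.le_leftLim hy).trans h, fun h =>
    _root_.le_of_tendsto (hF.tendsto_leftLim x) (eventually_nhdsWithin_of_forall h)⟩

theorem Monotone.subsingleton_quantiles_iff (hF : Monotone F) :
    (quantiles F p).Subsingleton ↔ (F ⁻¹' {p}).Subsingleton := by
  refine ⟨fun h => h.anti fun y (hy : F y = p) => ⟨hy ▸ hF.leftLim_le le_rfl, hy.ge⟩, ?_⟩
  intro h a ha b hb
  by_contra hab
  wlog hlt : a < b generalizing a b
  · exact this hb ha (Ne.symm hab) ((Ne.symm hab).lt_of_le (not_lt.1 hlt))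
  -- On `[a, b)` the function is squeezed between `F a ≥ p` and `F(b⁻) ≤ p`.
  have hFa : F a = p := le_antisymm ((hF.le_leftLim hlt).trans hb.1) ha.2
  have hmid : F ((a + b) / 2) = p :=
    le_antisymm ((hF.le_leftLim (by linarith)).trans hb.1) (hFa ▸ hF (by linarith))
  have := h hFa hmid
  linarith

end Monotone

theorem StieltjesFunction.le_iff_forall_lt_le (f : StieltjesFunction ℝ) {x p : ℝ} :
    p ≤ f x ↔ ∀ y, x < y → p ≤ f y :=
  ⟨fun h _ hy => h.trans (f.mono hy.le), fun h =>
    ge_of_tendsto (f.right_continuous x |>.mono Ioi_subset_Ici_self)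
      (eventually_nhdsWithin_of_forall h)⟩

theorem StieltjesFunction.quantiles_nonempty (f : StieltjesFunction ℝ) {p : ℝ}
    (hlow : ∃ x, f x < p) (hhigh : ∃ x, p ≤ f x) : (quantiles f p).Nonempty := by
  set S := {t | p ≤ f t}
  obtain ⟨x₀, hx₀⟩ := hlow
  have hbdd : BddBelow S :=
    ⟨x₀, fun t ht => le_of_not_ge fun htx => (ht.trans (f.mono htx)).not_gt hx₀⟩
  refine ⟨sInf S, f.mono.leftLim_le_iff.2 fun y hy => ?_, f.le_iff_forall_lt_le.2 fun y hy => ?_⟩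
  · exact (not_le.1 (notMem_of_lt_csInf (s := S) hy hbdd)).le
  · obtain ⟨t, ht, hty⟩ := (csInf_lt_iff hbdd hhigh).1 hy
    exact ht.trans (f.mono hty.le)

section Integral

variable {μ : Measure ℝ}

theorem integrable_abs_sub_sub_abs_sub [IsFiniteMeasure μ] (a b : ℝ) :
    Integrable (fun x => |a - x| - |b - x|) μ := by
  refine (integrable_const |a - b|).mono' (by fun_prop) (.of_forall fun x => ?_)
  simpa using abs_abs_sub_abs_le_abs_sub (a - x) (b - x)

theorem integral_indicator_sub_const [IsProbabilityMeasure μ] {s : Set ℝ} (hs : MeasurableSet s)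
    (c : ℝ) : ∫ x, (s.indicator (fun _ => 2 * c) x - c) ∂μ = c * (2 * μ.real s - 1) := by
  rw [integral_sub ((integrable_const _).indicator hs) (integrable_const c),
    integral_indicator_const _ hs, integral_const, probReal_univ]
  simp only [smul_eq_mul]
  ring

variable [IsProbabilityMeasure μ]

theorem measureReal_Iio_eq_leftLim_cdf (x : ℝ) : μ.real (Iio x) = leftLim (cdf μ) x := by
  have h := (cdf μ).measure_Iio (tendsto_cdf_atBot μ) x
  rw [measure_cdf, sub_zero] at h
  rw [measureReal_def, h, ENNReal.toReal_ofReal]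
  exact (cdf_nonneg μ (x - 1)).trans ((monotone_cdf μ).le_leftLim (by linarith))

theorem mul_two_mul_cdf_sub_one_le_integral {a b : ℝ} (hab : a ≤ b) :
    (b - a) * (2 * cdf μ a - 1) ≤ ∫ x, (|b - x| - |a - x|) ∂μ := by
  rw [cdf_eq_real, ← integral_indicator_sub_const measurableSet_Iic]
  refine integral_mono ((integrable_const _).indicator measurableSet_Iic |>.sub
    (integrable_const _)) (integrable_abs_sub_sub_abs_sub b a) fun x => ?_
  by_cases hx : x ≤ a
  · simp only [indicator_of_mem (mem_Iic.2 hx), abs_of_nonneg (sub_nonneg.2 hx),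
      abs_of_nonneg (sub_nonneg.2 (hx.trans hab))]
    linarith
  · simp only [indicator_of_notMem (fun h => hx (mem_Iic.1 h))]
    linarith [abs_sub_abs_le_abs_sub (a - x) (b - x), abs_sub_comm (a - x) (b - x),
      abs_of_nonneg (show 0 ≤ b - x - (a - x) by linarith)]

theorem integral_le_mul_two_mul_leftLim_cdf_sub_one {a b : ℝ} (hab : a ≤ b) :
    ∫ x, (|b - x| - |a - x|) ∂μ ≤ (b - a) * (2 * leftLim (cdf μ) b - 1) := by
  rw [← measureReal_Iio_eq_leftLim_cdf, ← integral_indicator_sub_const measurableSet_Iio]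
  refine integral_mono (integrable_abs_sub_sub_abs_sub b a)
    ((integrable_const _).indicator measurableSet_Iio |>.sub (integrable_const _)) fun x => ?_
  by_cases hx : x < b
  · simp only [indicator_of_mem (mem_Iio.2 hx)]
    linarith [abs_sub_abs_le_abs_sub (b - x) (a - x),
      abs_of_nonneg (show 0 ≤ b - x - (a - x) by linarith)]
  · have hx : b ≤ x := not_lt.1 hx
    simp only [indicator_of_notMem (fun h => hx.not_gt (mem_Iio.1 h)),
      abs_of_nonpos (sub_nonpos.2 hx), abs_of_nonpos (sub_nonpos.2 (hab.trans hx))]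
    linarith

end Integral

section Objective

variable (μ : Measure ℝ) (ℓ : ℝ)

theorem geometricQuantileObjective_sub [IsFiniteMeasure μ] (a b : ℝ) :
    geometricQuantileObjective μ ℓ b - geometricQuantileObjective μ ℓ a =
      ∫ x, (|b - x| - |a - x|) ∂μ - ℓ * (b - a) := by
  have hint : ∫ x, (|b - x| - |a - x|) ∂μ =
      ∫ x, (|b - x| - |x|) ∂μ - ∫ x, (|a - x| - |x|) ∂μ := by
    simpa using integral_sub (integrable_abs_sub_sub_abs_sub b 0 (μ := μ))
      (integrable_abs_sub_sub_abs_sub a 0)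
  rw [geometricQuantileObjective, geometricQuantileObjective, hint]
  ring

variable [IsProbabilityMeasure μ]

theorem two_mul_sub_cdf_le_geometricQuantileObjective_sub {a b : ℝ} (hab : a ≤ b) :
    2 * (b - a) * (cdf μ a - (1 + ℓ) / 2) ≤
      geometricQuantileObjective μ ℓ b - geometricQuantileObjective μ ℓ a := by
  rw [geometricQuantileObjective_sub]
  linarith [mul_two_mul_cdf_sub_one_le_integral (μ := μ) hab]

theorem geometricQuantileObjective_sub_le_two_mul_sub_leftLim_cdf {a b : ℝ} (hab : a ≤ b) :
    geometricQuantileObjective μ ℓ b - geometricQuantileObjective μ ℓ a ≤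
      2 * (b - a) * (leftLim (cdf μ) b - (1 + ℓ) / 2) := by
  rw [geometricQuantileObjective_sub]
  linarith [integral_le_mul_two_mul_leftLim_cdf_sub_one (μ := μ) hab]

variable {μ ℓ} in
theorem isMinOn_geometricQuantileObjective_iff {α : ℝ} :
    IsMinOn (geometricQuantileObjective μ ℓ) univ α ↔ α ∈ quantiles (cdf μ) ((1 + ℓ) / 2) := by
  rw [isMinOn_univ_iff]
  constructor
  · intro hmin
    refine ⟨(monotone_cdf μ).leftLim_le_iff.2 fun s hs => ?_,
      (cdf μ).le_iff_forall_lt_le.2 fun b hb => ?_⟩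
    · have := two_mul_sub_cdf_le_geometricQuantileObjective_sub μ ℓ hs.le
      nlinarith [hmin s]
    · have := geometricQuantileObjective_sub_le_two_mul_sub_leftLim_cdf μ ℓ hb.le
      nlinarith [hmin b, (monotone_cdf μ).leftLim_le (le_refl b)]
  · rintro ⟨hleft, hright⟩ b
    rcases le_total α b with h | h
    · have := two_mul_sub_cdf_le_geometricQuantileObjective_sub μ ℓ h
      nlinarith
    · have := geometricQuantileObjective_sub_le_two_mul_sub_leftLim_cdf μ ℓ h
      nlinarith

end Objective

/-- `μ` has a unique geometric `ℓ`-quantile iff the preimage of `p = (1+ℓ)/2` under the CDF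
is empty or a singleton. -/
theorem stmt5 (μ : Measure ℝ) [IsProbabilityMeasure μ]
    (ℓ : ℝ) (hℓ : ℓ ∈ Set.Ioo (-1 : ℝ) 1)
    (p : ℝ) (hp : p = (1 + ℓ) / 2)
    (φ : ℝ → ℝ) (hφ : ∀ α, φ α = (∫ x, (|α - x| - |x|) ∂μ) - ℓ * α) :
    (∃! α : ℝ, IsMinOn φ Set.univ α) ↔
      Set.Subsingleton ((fun x => ProbabilityTheory.cdf μ x) ⁻¹' {p}) := by
  have hmin : ∀ α, IsMinOn φ univ α ↔ α ∈ quantiles (cdf μ) p := by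
    rw [show φ = geometricQuantileObjective μ ℓ from funext hφ, hp]
    exact fun α => isMinOn_geometricQuantileObjective_iff
  have hlow : ∃ x, cdf μ x < p :=
    ((tendsto_cdf_atBot μ).eventually_lt_const (by rw [hp]; linarith [hℓ.1])).exists
  have hhigh : ∃ x, p ≤ cdf μ x :=
    ((tendsto_cdf_atTop μ).eventually_const_le (by rw [hp]; linarith [hℓ.2])).exists
  obtain ⟨a, ha⟩ := (cdf μ).quantiles_nonempty hlow hhigh
  simp_rw [hmin, ← (monotone_cdf μ).subsingleton_quantiles_iff]
  exact ⟨fun h => h.setSubsingleton, fun h => ⟨a, ha, fun b hb => h hb ha⟩⟩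
end

section
/- If E is a reflexive Banach space, then for every Borel probability measure μ on E and every ℓ ∈ E* with ‖ℓ‖ < 1, the function φ_ℓ(α) = ∫(‖α - x‖ - ‖x‖) dμ(x) - ℓ(α) attains its infimum, i.e., μ has at least one geometric ℓ-quantile. -/
/-!
A lower semicontinuous quasiconvex function on a normed space has weakly closed sublevel sets, hence
is weakly lower semicontinuous. If the space is reflexive, bounded weakly closed sets are weakly
compact (Banach–Alaoglu in the bidual), so a coercive such function attains its minimum on a
bounded sublevel set. The function `φ_ℓ` is convex and `1`-Lipschitz up to the linear term, and it
is coercive when `‖ℓ‖ < 1` because `‖a - x‖ - ‖x‖ ≥ ‖a‖ - 2 min ‖x‖ ‖a‖` and, by dominated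
convergence, `∫ min ‖x‖ t dμ = o(t)`.
-/

open MeasureTheory NormedSpace Filter Topology Bornology

section WeakTopology

variable {E : Type*} [AddCommGroup E] [Module ℝ E] [TopologicalSpace E] [IsTopologicalAddGroup E]
  [ContinuousSMul ℝ E] [LocallyConvexSpace ℝ E]

theorem Convex.isClosed_toWeakSpace_image {s : Set E} (hs : Convex ℝ s) (hcl : IsClosed s) :
    IsClosed (toWeakSpace ℝ E '' s) := by
  rw [← hcl.closure_eq, hs.toWeakSpace_closure ℝ]
  exact isClosed_closure

theorem QuasiconvexOn.lowerSemicontinuous_comp_toWeakSpace_symm {f : E → ℝ}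
    (hf : QuasiconvexOn ℝ Set.univ f) (hlsc : LowerSemicontinuous f) :
    LowerSemicontinuous (f ∘ (toWeakSpace ℝ E).symm) := by
  refine lowerSemicontinuous_iff_isClosed_preimage.2 fun y => ?_
  have hpre : f ∘ (toWeakSpace ℝ E).symm ⁻¹' Set.Iic y = toWeakSpace ℝ E '' {a | f a ≤ y} := by
    rw [Set.preimage_comp, LinearEquiv.image_eq_preimage_symm]
    rfl
  rw [hpre]
  exact (by simpa using hf y : Convex ℝ {a | f a ≤ y}).isClosed_toWeakSpace_image
    (hlsc.isClosed_preimage y)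

end WeakTopology

section Reflexive

variable {E : Type*} [NormedAddCommGroup E] [NormedSpace ℝ E]

theorem isCompact_toWeakSpace_image_of_surjective_inclusionInDoubleDual
    (hrefl : Function.Surjective (inclusionInDoubleDual ℝ E)) {s : Set E} (hb : IsBounded s)
    (hs : Convex ℝ s) (hcl : IsClosed s) : IsCompact (toWeakSpace ℝ E '' s) := by
  have hrange : Set.range (inclusionInDoubleDualWeak ℝ E) = Set.univ := by
    refine Set.eq_univ_of_forall fun F => ?_
    obtain ⟨x, hx⟩ := hrefl (WeakDual.toStrongDual F)
    refine ⟨toWeakSpace ℝ E x, ?_⟩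
    rw [inclusionInDoubleDualWeak_apply, LinearEquiv.symm_apply_apply, hx]
    rfl
  rw [← (hs.isClosed_toWeakSpace_image hcl).closure_eq]
  refine isCompact_closure_of_isBounded ℝ E _ ?_ (hrange ▸ Set.subset_univ _)
  rwa [Set.preimage_image_eq _ (toWeakSpace ℝ E).injective]

theorem QuasiconvexOn.exists_isMinOn_of_tendsto_cobounded
    (hrefl : Function.Surjective (inclusionInDoubleDual ℝ E)) {f : E → ℝ}
    (hf : QuasiconvexOn ℝ Set.univ f) (hlsc : LowerSemicontinuous f)
    (hcoer : Tendsto f (cobounded E) atTop) : ∃ α, IsMinOn f Set.univ α := by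
  have hb : IsBounded {a | f a ≤ f 0} := by
    rw [isBounded_def]
    filter_upwards [hcoer.eventually_gt_atTop (f 0)] with a ha
    exact not_le.2 ha
  have hK := isCompact_toWeakSpace_image_of_surjective_inclusionInDoubleDual hrefl hb
    (by simpa using hf (f 0)) (hlsc.isClosed_preimage (f 0))
  obtain ⟨_, ⟨α, hα, rfl⟩, hmin⟩ := ((hf.lowerSemicontinuous_comp_toWeakSpace_symm hlsc
    ).lowerSemicontinuousOn _).exists_isMinOn (.image _ ⟨0, (le_rfl : f 0 ≤ f 0)⟩) hK
  refine ⟨α, fun y _ => ?_⟩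
  by_cases hy : f y ≤ f 0
  · simpa using hmin ⟨y, hy, rfl⟩
  · exact hα.trans (not_le.1 hy).le

end Reflexive

section GeometricQuantile

variable {E : Type*} [NormedAddCommGroup E]

theorem abs_norm_sub_sub_norm_le (a x : E) : |‖a - x‖ - ‖x‖| ≤ ‖a‖ := by
  simpa using abs_norm_sub_norm_le (a - x) (-x)

theorem norm_sub_two_mul_min_le_norm_sub_sub_norm (a x : E) :
    ‖a‖ - 2 * min ‖x‖ ‖a‖ ≤ ‖a - x‖ - ‖x‖ := by
  rcases le_total ‖x‖ ‖a‖ with h | h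
  · rw [min_eq_left h]
    linarith [norm_sub_norm_le a x]
  · rw [min_eq_right h]
    linarith [(abs_le.1 (abs_norm_sub_sub_norm_le a x)).1]

variable [MeasurableSpace E] [OpensMeasurableSpace E]

theorem integrable_norm_sub_sub_norm (μ : Measure E) [IsFiniteMeasure μ] (a : E) :
    Integrable (fun x => ‖a - x‖ - ‖x‖) μ :=
  (integrable_const ‖a‖).mono' (by fun_prop) (.of_forall (abs_norm_sub_sub_norm_le a))

variable (μ : Measure E) [IsProbabilityMeasure μ]

theorem lipschitzWith_integral_norm_sub_sub_norm :
    LipschitzWith 1 (fun a => ∫ x, (‖a - x‖ - ‖x‖) ∂μ) := by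
  refine LipschitzWith.of_dist_le_mul fun a b => ?_
  rw [dist_eq_norm, dist_eq_norm, ← integral_sub (integrable_norm_sub_sub_norm μ a)
    (integrable_norm_sub_sub_norm μ b), NNReal.coe_one, one_mul]
  refine (norm_integral_le_of_norm_le_const (C := ‖a - b‖) (.of_forall fun x => ?_)).trans_eq
    (by simp)
  rw [sub_sub_sub_cancel_right, Real.norm_eq_abs]
  simpa using abs_norm_sub_norm_le (a - x) (b - x)

theorem tendsto_integral_min_norm_div_atTop :
    Tendsto (fun t : ℝ => ∫ x, min ‖x‖ t / t ∂μ) atTop (𝓝 0) := by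
  have hlim : ∀ x : E, Tendsto (fun t : ℝ => min ‖x‖ t / t) atTop (𝓝 0) := fun x =>
    ((tendsto_const_nhds (x := ‖x‖)).div_atTop tendsto_id).congr'
      ((eventually_ge_atTop ‖x‖).mono fun t ht => by simp [min_eq_left ht])
  have hbound : ∀ᶠ t : ℝ in atTop, ∀ᵐ x ∂μ, ‖min ‖x‖ t / t‖ ≤ 1 :=
    (eventually_gt_atTop 0).mono fun t ht => .of_forall fun x => by
      rw [Real.norm_eq_abs, abs_of_nonneg (by positivity), div_le_one ht]
      exact min_le_right _ _
  simpa using tendsto_integral_filter_of_dominated_convergence (fun _ => (1 : ℝ))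
    (.of_forall fun t => by fun_prop) hbound (integrable_const 1) (.of_forall hlim)

-- `‖x‖` need not be `μ`-integrable, hence the truncation at `‖a‖`.
theorem norm_sub_two_mul_integral_min_le (a : E) :
    ‖a‖ - 2 * ∫ x, min ‖x‖ ‖a‖ ∂μ ≤ ∫ x, (‖a - x‖ - ‖x‖) ∂μ := by
  have hmin : Integrable (fun x => min ‖x‖ ‖a‖) μ :=
    (integrable_const ‖a‖).mono' (by fun_prop) (.of_forall fun x => by
      rw [Real.norm_eq_abs, abs_of_nonneg (by positivity)]
      exact min_le_right _ _)
  calc ‖a‖ - 2 * ∫ x, min ‖x‖ ‖a‖ ∂μ = ∫ x, (‖a‖ - 2 * min ‖x‖ ‖a‖) ∂μ := by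
        rw [integral_sub (integrable_const _) (hmin.const_mul 2), integral_const_mul]
        simp
    _ ≤ ∫ x, (‖a - x‖ - ‖x‖) ∂μ :=
        integral_mono ((integrable_const _).sub (hmin.const_mul 2))
          (integrable_norm_sub_sub_norm μ a) (norm_sub_two_mul_min_le_norm_sub_sub_norm a)

variable [NormedSpace ℝ E]

theorem convexOn_integral_norm_sub_sub_norm :
    ConvexOn ℝ Set.univ (fun a => ∫ x, (‖a - x‖ - ‖x‖) ∂μ) := by
  refine ⟨convex_univ, fun a _ b _ s t hs ht hst => ?_⟩
  have hpt : ∀ x : E, ‖(s • a + t • b) - x‖ - ‖x‖ ≤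
      s * (‖a - x‖ - ‖x‖) + t * (‖b - x‖ - ‖x‖) := fun x => by
    have hcomb : s • a + t • b - x = s • (a - x) + t • (b - x) := by
      conv_lhs => rw [← Convex.combo_self hst x]
      rw [smul_sub, smul_sub]
      abel
    have hnorm := convexOn_univ_norm.2 trivial trivial hs ht hst (x := a - x) (y := b - x)
    rw [hcomb]
    simp only [smul_eq_mul] at hnorm
    linarith [congrArg (· * ‖x‖) hst]
  have hs_int := (integrable_norm_sub_sub_norm μ a).const_mul s
  have ht_int := (integrable_norm_sub_sub_norm μ b).const_mul t
  calc ∫ x, (‖(s • a + t • b) - x‖ - ‖x‖) ∂μ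
      ≤ ∫ x, (s * (‖a - x‖ - ‖x‖) + t * (‖b - x‖ - ‖x‖)) ∂μ :=
        integral_mono (integrable_norm_sub_sub_norm μ _) (hs_int.add ht_int) hpt
    _ = s • ∫ x, (‖a - x‖ - ‖x‖) ∂μ + t • ∫ x, (‖b - x‖ - ‖x‖) ∂μ := by
        rw [integral_add hs_int ht_int, integral_const_mul, integral_const_mul, smul_eq_mul,
          smul_eq_mul]

theorem tendsto_integral_norm_sub_sub_norm_sub_cobounded (ℓ : StrongDual ℝ E) (hℓ : ‖ℓ‖ < 1) :
    Tendsto (fun a => (∫ x, (‖a - x‖ - ‖x‖) ∂μ) - ℓ a) (cobounded E) atTop := by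
  have hsmall : ∀ᶠ t in atTop, 0 < t ∧ ∫ x, min ‖x‖ t / t ∂μ ≤ (1 - ‖ℓ‖) / 4 :=
    (eventually_gt_atTop 0).and ((tendsto_integral_min_norm_div_atTop μ).eventually
      (ge_mem_nhds (by linarith)))
  refine tendsto_atTop_mono' _ ?_
    (tendsto_norm_cobounded_atTop.const_mul_atTop (show 0 < (1 - ‖ℓ‖) / 2 by linarith))
  filter_upwards [tendsto_norm_cobounded_atTop.eventually hsmall] with a ⟨ha, hsmall⟩
  rw [integral_div, div_le_iff₀ ha] at hsmall
  linarith [norm_sub_two_mul_integral_min_le μ a, (le_abs_self (ℓ a)).trans (ℓ.le_opNorm a)]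

end GeometricQuantile

theorem stmt6_general {E : Type*} [NormedAddCommGroup E] [NormedSpace ℝ E]
    [MeasurableSpace E] [BorelSpace E]
    (hrefl : Function.Surjective (NormedSpace.inclusionInDoubleDual ℝ E))
    (μ : Measure E) [IsProbabilityMeasure μ]
    (ℓ : StrongDual ℝ E) (hℓ : ‖ℓ‖ < 1) :
    ∃ α : E, IsMinOn (fun a : E => (∫ x, (‖a - x‖ - ‖x‖) ∂μ) - ℓ a) Set.univ α := by
  have hconvex := (convexOn_integral_norm_sub_sub_norm μ).sub
    ((ℓ : E →ₗ[ℝ] ℝ).concaveOn convex_univ)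
  have hcont := (lipschitzWith_integral_norm_sub_sub_norm μ).continuous.sub ℓ.continuous
  exact hconvex.quasiconvexOn.exists_isMinOn_of_tendsto_cobounded hrefl hcont.lowerSemicontinuous
    (tendsto_integral_norm_sub_sub_norm_sub_cobounded μ ℓ hℓ)

/-- If `E` is a reflexive Banach space, then for every Borel probability measure `μ` and every
`ℓ ∈ E*` with `‖ℓ‖ < 1`, the objective function `φ_ℓ` attains its infimum. -/
theorem stmt6 {E : Type*} [NormedAddCommGroup E] [NormedSpace ℝ E] [CompleteSpace E]
    [MeasurableSpace E] [BorelSpace E]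
    (hrefl : Function.Surjective (NormedSpace.inclusionInDoubleDual ℝ E))
    (μ : Measure E) [IsProbabilityMeasure μ]
    (ℓ : StrongDual ℝ E) (hℓ : ‖ℓ‖ < 1) :
    ∃ α : E, IsMinOn (fun a : E => (∫ x, (‖a - x‖ - ‖x‖) ∂μ) - ℓ a) Set.univ α :=
  stmt6_general hrefl μ ℓ hℓ
end
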